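/- arXiv:1210.1952 — 3 statements merged into one kernel-verified Lean document; each statement's English description precedes it below -/
import Mathlib

section
/- Let f : I → ℝ be continuous on an interval I and c ≥ 1. If f satisfies condition P_{c−1} (for all x < y with f(x) = f(y), max_{x ≤ t ≤ y}|f(x) − f(t)| ≤ (c−1)|x−y|), then the graph of f is symmetrically c-monotone: for all x < y < z in I, both |ψ(x) − ψ(y)| ≤ c|ψ(x) − ψ(z)| and |ψ(z) − ψ(y)| ≤ c|ψ(x) − ψ(z)|, where ψ(t) = (t, f(t)). -/
/-!
If `f y` lies between `f x` and `f z`, then `ψ y - ψ x` is dominated coordinatewise by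
`ψ z - ψ x`. Otherwise `f y` overshoots the nearer of the two levels `f x`, `f z`; by the
intermediate value theorem that level is attained again on the far side of `y`, so condition
`P_{c-1}` bounds the overshoot by `(c - 1)|x - z|`. Splitting off the vertical overshoot gives
`|ψ y - ψ x| ≤ |ψ z - ψ x| + (c - 1)|x - z| ≤ c|ψ z - ψ x|`, and exchanging `x` and `z` gives
the other inequality.
-/

/-- The natural parametrization of the graph of `f`, as a map into the Euclidean plane. -/
noncomputable def graphMap (f : ℝ → ℝ) (t : ℝ) : EuclideanSpace ℝ (Fin 2) := !₂[t, f t]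

open Set

lemma norm_toLp_fin_two (p q : ℝ) : ‖!₂[p, q]‖ = √(p ^ 2 + q ^ 2) := by
  simp [EuclideanSpace.norm_eq, Fin.sum_univ_two]

lemma norm_toLp_fin_two_le {p q p' q' : ℝ} (hp : |p| ≤ |p'|) (hq : |q| ≤ |q'|) :
    ‖!₂[p, q]‖ ≤ ‖!₂[p', q']‖ := by
  rw [norm_toLp_fin_two, norm_toLp_fin_two]
  exact Real.sqrt_le_sqrt (add_le_add (sq_le_sq.2 hp) (sq_le_sq.2 hq))

lemma graphMap_sub (f : ℝ → ℝ) (s t : ℝ) :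
    graphMap f s - graphMap f t = !₂[s - t, f s - f t] := by
  ext i; fin_cases i <;> rfl

lemma abs_sub_le_norm_graphMap_sub (f : ℝ → ℝ) (s t : ℝ) :
    |s - t| ≤ ‖graphMap f s - graphMap f t‖ := by
  simpa [graphMap_sub, norm_toLp_fin_two, Real.sqrt_sq_eq_abs] using
    norm_toLp_fin_two_le (q := 0) (le_refl |s - t|) (by simp : |(0 : ℝ)| ≤ |f s - f t|)

lemma norm_graphMap_sub_le {f : ℝ → ℝ} {a b y l : ℝ} (hy : y ∈ uIcc a b)
    (hl : l ∈ uIcc (f a) (f b)) :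
    ‖graphMap f y - graphMap f a‖ ≤ ‖graphMap f b - graphMap f a‖ + |f y - l| := by
  have hsplit : graphMap f y - graphMap f a = !₂[y - a, l - f a] + !₂[0, f y - l] := by
    ext i; fin_cases i <;> simp [graphMap]
  calc ‖graphMap f y - graphMap f a‖ ≤ ‖!₂[y - a, l - f a]‖ + ‖!₂[(0 : ℝ), f y - l]‖ := by
        rw [hsplit]; exact norm_add_le _ _
    _ ≤ ‖graphMap f b - graphMap f a‖ + |f y - l| := by
        rw [graphMap_sub, norm_toLp_fin_two 0, zero_pow two_ne_zero, zero_add, Real.sqrt_sq_eq_abs]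
        gcongr
        exact norm_toLp_fin_two_le (abs_sub_left_of_mem_uIcc hy) (abs_sub_left_of_mem_uIcc hl)

/-- The paper's condition `P_K`, stated symmetrically in the two points of a level set. -/
def ConditionP (K : ℝ) (f : ℝ → ℝ) (I : Set ℝ) : Prop :=
  ∀ u ∈ I, ∀ v ∈ I, f u = f v → ∀ t ∈ uIcc u v, |f u - f t| ≤ K * |u - v|

lemma conditionP_of_lt {K : ℝ} {f : ℝ → ℝ} {I : Set ℝ}
    (hP : ∀ x ∈ I, ∀ y ∈ I, x < y → f x = f y → ∀ t ∈ Icc x y, |f x - f t| ≤ K * |x - y|) :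
    ConditionP K f I := by
  intro u hu v hv huv t ht
  rcases lt_trichotomy u v with h | rfl | h
  · exact hP u hu v hv h huv t (uIcc_of_le h.le ▸ ht)
  · simp_all
  · rw [huv, abs_sub_comm u]
    exact hP v hv u hu h huv.symm t (uIcc_of_ge h.le ▸ ht)

namespace ConditionP

variable {K : ℝ} {f : ℝ → ℝ} {I : Set ℝ}

lemma abs_sub_le_of_mem_uIcc (hP : ConditionP K f I) (hK : 0 ≤ K)
    (hI : I.OrdConnected) (hf : ContinuousOn f I) {a b y : ℝ} (ha : a ∈ I) (hb : b ∈ I)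
    (hy : y ∈ uIcc a b) (hfa : f a ∈ uIcc (f y) (f b)) :
    |f a - f y| ≤ K * |a - b| := by
  have hyI : y ∈ I := hI.uIcc_subset ha hb hy
  obtain ⟨w, hw, hfw⟩ := intermediate_value_uIcc (hf.mono (hI.uIcc_subset hyI hb)) hfa
  have hwab : w ∈ uIcc a b := uIcc_subset_uIcc_right hy hw
  have hyaw : y ∈ uIcc a w := by simp only [mem_uIcc] at *; grind
  calc |f a - f y| ≤ K * |a - w| := hP a ha w (hI.uIcc_subset ha hb hwab) hfw.symm y hyaw
    _ ≤ K * |a - b| := by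
        refine mul_le_mul_of_nonneg_left ?_ hK
        simpa only [abs_sub_comm] using abs_sub_left_of_mem_uIcc hwab

lemma exists_mem_uIcc_abs_sub_le (hP : ConditionP K f I) (hK : 0 ≤ K)
    (hI : I.OrdConnected) (hf : ContinuousOn f I) {a b y : ℝ} (ha : a ∈ I) (hb : b ∈ I)
    (hy : y ∈ uIcc a b) : ∃ l ∈ uIcc (f a) (f b), |f y - l| ≤ K * |a - b| := by
  by_cases hfy : f y ∈ uIcc (f a) (f b)
  · exact ⟨f y, hfy, by simpa using mul_nonneg hK (abs_nonneg (a - b))⟩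
  have : f a ∈ uIcc (f y) (f b) ∨ f b ∈ uIcc (f y) (f a) := by
    simp only [mem_uIcc] at *; grind
  rcases this with hfa | hfb
  · refine ⟨f a, left_mem_uIcc, ?_⟩
    rw [abs_sub_comm]
    exact hP.abs_sub_le_of_mem_uIcc hK hI hf ha hb hy hfa
  · refine ⟨f b, right_mem_uIcc, ?_⟩
    rw [abs_sub_comm, abs_sub_comm a]
    exact hP.abs_sub_le_of_mem_uIcc hK hI hf hb ha (uIcc_comm a b ▸ hy) hfb

lemma norm_graphMap_sub_le_mul {c : ℝ} (hP : ConditionP (c - 1) f I) (hc : 1 ≤ c)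
    (hI : I.OrdConnected) (hf : ContinuousOn f I) {a b y : ℝ} (ha : a ∈ I) (hb : b ∈ I)
    (hy : y ∈ uIcc a b) :
    ‖graphMap f y - graphMap f a‖ ≤ c * ‖graphMap f b - graphMap f a‖ := by
  obtain ⟨l, hl, hyl⟩ := hP.exists_mem_uIcc_abs_sub_le (sub_nonneg.2 hc) hI hf ha hb hy
  calc ‖graphMap f y - graphMap f a‖ ≤ ‖graphMap f b - graphMap f a‖ + |f y - l| :=
        norm_graphMap_sub_le hy hl
    _ ≤ ‖graphMap f b - graphMap f a‖ + (c - 1) * ‖graphMap f b - graphMap f a‖ := by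
        have hab : |a - b| ≤ ‖graphMap f b - graphMap f a‖ :=
          abs_sub_comm a b ▸ abs_sub_le_norm_graphMap_sub f b a
        gcongr
        exact hyl.trans (mul_le_mul_of_nonneg_left hab (sub_nonneg.2 hc))
    _ = c * ‖graphMap f b - graphMap f a‖ := by ring

end ConditionP

/-- If `f : I → ℝ` is continuous on an interval `I`, `c ≥ 1`, and `f` satisfies condition
`P_{c-1}`, then the graph of `f` is symmetrically `c`-monotone: for all `x < y < z` in `I`,
both `|ψx − ψy| ≤ c|ψx − ψz|` and `|ψz − ψy| ≤ c|ψx − ψz|`. -/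
theorem stmt_2 (I : Set ℝ) (hI : I.OrdConnected) (f : ℝ → ℝ)
    (hf : ContinuousOn f I) (c : ℝ) (hc : 1 ≤ c)
    (hP : ∀ x ∈ I, ∀ y ∈ I, x < y → f x = f y →
      ∀ t ∈ Set.Icc x y, |f x - f t| ≤ (c - 1) * |x - y|) :
    ∀ x ∈ I, ∀ y ∈ I, ∀ z ∈ I, x < y → y < z →
      ‖graphMap f x - graphMap f y‖ ≤ c * ‖graphMap f x - graphMap f z‖ ∧
      ‖graphMap f z - graphMap f y‖ ≤ c * ‖graphMap f x - graphMap f z‖ := by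
  intro x hx y _ z hz hxy hyz
  have hP' := conditionP_of_lt hP
  have hy : y ∈ uIcc x z := mem_uIcc_of_le hxy.le hyz.le
  refine ⟨?_, ?_⟩
  · rw [norm_sub_rev (graphMap f x) (graphMap f y), norm_sub_rev (graphMap f x) (graphMap f z)]
    exact hP'.norm_graphMap_sub_le_mul hc hI hf hx hz hy
  · rw [norm_sub_rev (graphMap f z) (graphMap f y)]
    exact hP'.norm_graphMap_sub_le_mul hc hI hf hz hx (uIcc_comm x z ▸ hy)
end

section
/- Let f : I → ℝ be continuous and y ∈ I. If y is not an M-point of f, then either (the upper right Dini derivative of f at y is +∞ and the lower left Dini derivative is −∞), or (the upper left Dini derivative is +∞ and the lower right Dini derivative is −∞). -/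
/-!
If `y` is not an `M`-point, then for every `c ≥ 1` there are `x < y < z` arbitrarily close to `y`
with `c (|f x - f z| + (z - x)) < |f x - f y|`. Then `f x - f y` and `f z - f y` have the same sign
and exceed `c` times the distances to `y`, so the difference quotients at `x` and `z` have opposite
signs and absolute value `> c`: `y` is a steep valley or a steep peak of the chord pair `(x, z)`.
Steepness `c` implies steepness `c' ≤ c`, so one of the two shapes occurs near `y` for every `c`,
and that shape makes one upper Dini derivative `+∞` and the opposite-side lower one `-∞`.
-/

open Filter

/-- Upper right Dini derivative of `f` at `y`, relative to `I`, with values in `EReal`. -/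
noncomputable def diniSupR (f : ℝ → ℝ) (I : Set ℝ) (y : ℝ) : EReal :=
  limsup (fun t => (((f t - f y) / (t - y) : ℝ) : EReal)) (nhdsWithin y (Set.Ioi y ∩ I))

/-- Lower right Dini derivative. -/
noncomputable def diniInfR (f : ℝ → ℝ) (I : Set ℝ) (y : ℝ) : EReal :=
  liminf (fun t => (((f t - f y) / (t - y) : ℝ) : EReal)) (nhdsWithin y (Set.Ioi y ∩ I))

/-- Upper left Dini derivative. -/
noncomputable def diniSupL (f : ℝ → ℝ) (I : Set ℝ) (y : ℝ) : EReal :=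
  limsup (fun t => (((f t - f y) / (t - y) : ℝ) : EReal)) (nhdsWithin y (Set.Iio y ∩ I))

/-- Lower left Dini derivative. -/
noncomputable def diniInfL (f : ℝ → ℝ) (I : Set ℝ) (y : ℝ) : EReal :=
  liminf (fun t => (((f t - f y) / (t - y) : ℝ) : EReal)) (nhdsWithin y (Set.Iio y ∩ I))

/-- `y` is an `M`-point of `f` (relative to `I`), in the equivalent analytic form. -/
def IsMPoint (f : ℝ → ℝ) (I : Set ℝ) (y : ℝ) : Prop :=
  ∃ c : ℝ, 1 ≤ c ∧ ∃ ε > 0, ∀ x ∈ Set.Ioo (y - ε) y ∩ I, ∀ z ∈ Set.Ioo y (y + ε) ∩ I,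
    |f x - f y| ≤ c * (|f x - f z| + |z - x|)

open Set Topology

def IsSteepValley (f : ℝ → ℝ) (y c : ℝ) (p : ℝ × ℝ) : Prop :=
  slope f y p.1 < -c ∧ c < slope f y p.2

def IsSteepPeak (f : ℝ → ℝ) (y c : ℝ) (p : ℝ × ℝ) : Prop :=
  c < slope f y p.1 ∧ slope f y p.2 < -c

lemma IsSteepValley.mono {f : ℝ → ℝ} {y c c' : ℝ} {p : ℝ × ℝ} (h : IsSteepValley f y c' p)
    (hc : c ≤ c') : IsSteepValley f y c p :=
  ⟨h.1.trans_le (neg_le_neg hc), hc.trans_lt h.2⟩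

lemma IsSteepPeak.mono {f : ℝ → ℝ} {y c c' : ℝ} {p : ℝ × ℝ} (h : IsSteepPeak f y c' p)
    (hc : c ≤ c') : IsSteepPeak f y c p :=
  ⟨hc.trans_lt h.1, h.2.trans_le (neg_le_neg hc)⟩

lemma isSteepValley_of_lt {f : ℝ → ℝ} {x y z c : ℝ} (hx : x < y) (hz : y < z) (hc : 1 ≤ c)
    (h : c * (|f x - f z| + (z - x)) < f x - f y) : IsSteepValley f y c (x, z) := by
  have hd : 0 ≤ |f x - f z| := abs_nonneg _
  have hdc : |f x - f z| ≤ c * |f x - f z| := le_mul_of_one_le_left hd hc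
  have hzx : c * (z - y) ≤ c * (z - x) := by gcongr
  have hyx : c * (y - x) ≤ c * (z - x) := by gcongr
  rw [mul_add] at h
  refine ⟨?_, ?_⟩ <;> simp only [slope_def_field]
  · rw [div_lt_iff_of_neg (by linarith)]
    linarith
  · rw [lt_div_iff₀ (by linarith)]
    linarith [le_abs_self (f x - f z)]

-- A peak of `f` is a valley of `-f`.
lemma isSteepValley_or_isSteepPeak {f : ℝ → ℝ} {x y z c : ℝ} (hx : x < y) (hz : y < z)
    (hc : 1 ≤ c) (h : c * (|f x - f z| + |z - x|) < |f x - f y|) :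
    IsSteepValley f y c (x, z) ∨ IsSteepPeak f y c (x, z) := by
  rw [abs_of_pos (sub_pos.2 (hx.trans hz))] at h
  rcases lt_or_ge (f y) (f x) with hxy | hxy
  · rw [abs_of_pos (sub_pos.2 hxy)] at h
    exact .inl (isSteepValley_of_lt hx hz hc h)
  · rw [abs_of_nonpos (sub_nonpos.2 hxy), ← abs_neg (f x - f z)] at h
    have := isSteepValley_of_lt (f := -f) hx hz hc (by simpa only [Pi.neg_apply, neg_sub_neg,
      neg_sub] using h)
    simp only [IsSteepValley, slope_neg_fun, Pi.neg_apply, neg_lt_neg_iff, lt_neg] at this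
    exact .inr ⟨this.1, this.2⟩

lemma frequently_isSteepValley_or_isSteepPeak_of_not_isMPoint {f : ℝ → ℝ} {I : Set ℝ} {y : ℝ}
    (h : ¬ IsMPoint f I y) {c : ℝ} (hc : 1 ≤ c) :
    ∃ᶠ p in 𝓝[Iio y ∩ I] y ×ˢ 𝓝[Ioi y ∩ I] y, IsSteepValley f y c p ∨ IsSteepPeak f y c p := by
  rw [nhdsWithin_inter', nhdsWithin_inter', (((nhdsLT_basis y).inf_principal I).prod
    ((nhdsGT_basis y).inf_principal I)).frequently_iff]
  rintro ⟨a, b⟩ ⟨ha, hb⟩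
  by_contra! hsteep
  refine h ⟨c, hc, min (y - a) (b - y), lt_min (sub_pos.2 ha) (sub_pos.2 hb),
    fun x ⟨⟨hax, hxy⟩, hxI⟩ z ⟨⟨hyz, hzb⟩, hzI⟩ => ?_⟩
  by_contra! hM
  have hax' : a < x := by linarith [min_le_left (y - a) (b - y)]
  have hzb' : z < b := by linarith [min_le_right (y - a) (b - y)]
  exact not_or.2 (hsteep (x, z) ⟨⟨⟨hax', hxy⟩, hxI⟩, ⟨⟨hyz, hzb'⟩, hzI⟩⟩)
    (isSteepValley_or_isSteepPeak hxy hyz hc hM)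

lemma frequently_isSteepValley_or_frequently_isSteepPeak {f : ℝ → ℝ} {y : ℝ}
    {l : Filter (ℝ × ℝ)}
    (h : ∀ c, 1 ≤ c → ∃ᶠ p in l, IsSteepValley f y c p ∨ IsSteepPeak f y c p) :
    (∀ c, ∃ᶠ p in l, IsSteepValley f y c p) ∨ (∀ c, ∃ᶠ p in l, IsSteepPeak f y c p) := by
  by_contra! hne
  obtain ⟨⟨c₁, hc₁⟩, c₂, hc₂⟩ := hne
  obtain ⟨p, hp, hp₁, hp₂⟩ :=
    ((h (max 1 (max c₁ c₂)) (le_max_left _ _)).and_eventually (hc₁.and hc₂)).exists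
  rcases hp with hp | hp
  · exact hp₁ (hp.mono (le_max_left _ _ |>.trans (le_max_right _ _)))
  · exact hp₂ (hp.mono (le_max_right _ _ |>.trans (le_max_right _ _)))

lemma limsup_coe_eq_top_of_frequently_lt {α : Type*} {l : Filter α} {g : α → ℝ}
    (h : ∀ M : ℝ, ∃ᶠ t in l, M < g t) : limsup (fun t => (g t : EReal)) l = ⊤ :=
  (EReal.eq_top_iff_forall_lt _).2 fun M => (EReal.coe_lt_coe_iff.2 (lt_add_one M)).trans_le
    (le_limsup_of_frequently_le' ((h (M + 1)).mono fun _ ht => EReal.coe_le_coe_iff.2 ht.le))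

lemma liminf_coe_eq_bot_of_frequently_lt {α : Type*} {l : Filter α} {g : α → ℝ}
    (h : ∀ M : ℝ, ∃ᶠ t in l, g t < M) : liminf (fun t => (g t : EReal)) l = ⊥ :=
  (EReal.eq_bot_iff_forall_lt _).2 fun M => (liminf_le_of_frequently_le'
    ((h (M - 1)).mono fun _ ht => EReal.coe_le_coe_iff.2 ht.le)).trans_lt
    (EReal.coe_lt_coe_iff.2 (sub_one_lt M))

theorem stmt_5_general (I : Set ℝ) (f : ℝ → ℝ) (y : ℝ) (hnm : ¬ IsMPoint f I y) :
    (diniSupR f I y = ⊤ ∧ diniInfL f I y = ⊥) ∨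
    (diniSupL f I y = ⊤ ∧ diniInfR f I y = ⊥) := by
  simp only [diniSupR, diniInfR, diniSupL, diniInfL, ← slope_def_field]
  rcases frequently_isSteepValley_or_frequently_isSteepPeak fun _ =>
    frequently_isSteepValley_or_isSteepPeak_of_not_isMPoint hnm with hvalley | hpeak
  · refine .inl ⟨limsup_coe_eq_top_of_frequently_lt fun M => ?_,
      liminf_coe_eq_bot_of_frequently_lt fun M => ?_⟩
    · exact tendsto_snd.frequently ((hvalley M).mono fun _ hp => hp.2)
    · exact tendsto_fst.frequently ((hvalley (-M)).mono fun _ hp => (neg_neg M ▸ hp.1))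
  · refine .inr ⟨limsup_coe_eq_top_of_frequently_lt fun M => ?_,
      liminf_coe_eq_bot_of_frequently_lt fun M => ?_⟩
    · exact tendsto_fst.frequently ((hpeak M).mono fun _ hp => hp.1)
    · exact tendsto_snd.frequently ((hpeak (-M)).mono fun _ hp => (neg_neg M ▸ hp.2))

/-- If `f : I → ℝ` is continuous and `y ∈ I` is not an `M`-point of `f`, then either
`D⁺f(y) = +∞` and `D₋f(y) = −∞`, or `D⁻f(y) = +∞` and `D₊f(y) = −∞`. -/
theorem stmt_5 (I : Set ℝ) (hI : I.OrdConnected) (f : ℝ → ℝ) (hf : ContinuousOn f I)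
    (y : ℝ) (hy : y ∈ I) (hnm : ¬ IsMPoint f I y) :
    (diniSupR f I y = ⊤ ∧ diniInfL f I y = ⊥) ∨
    (diniSupL f I y = ⊤ ∧ diniInfR f I y = ⊥) :=
  stmt_5_general I f y hnm
end

section
/- Let (a_n), (b_n) be sequences of positive reals with Σ a_n < ∞, let (q_n) enumerate the rationals in [0,1], and define f(x) = Σ_{n} a_n ‖(x − q_n)/b_n‖, where ‖t‖ = dist(t, ℝ∖[−1,1]) = max(0, min(1+t, 1−t)). Then f is absolutely continuous on [0,1]. -/
/-- The tent function `‖t‖ = dist(t, ℝ∖[−1,1]) = max 0 (min (1+t) (1−t))`. -/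
noncomputable def tent (t : ℝ) : ℝ := max 0 (min (1 + t) (1 - t))

lemma tent_nonneg (t : ℝ) : 0 ≤ tent t := le_max_left _ _

lemma tent_le_one (t : ℝ) : tent t ≤ 1 := by
  unfold tent
  rcases le_total t 0 with h | h
  · exact max_le zero_le_one (le_trans (min_le_left _ _) (by linarith))
  · exact max_le zero_le_one (le_trans (min_le_right _ _) (by linarith))

lemma tent_lip (s t : ℝ) : |tent s - tent t| ≤ |s - t| := by
  unfold tent
  calc |max 0 (min (1+s) (1-s)) - max 0 (min (1+t) (1-t))|
      ≤ max |(0:ℝ) - 0| |min (1+s) (1-s) - min (1+t) (1-t)| :=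
        abs_max_sub_max_le_max _ _ _ _
    _ ≤ max |(0:ℝ) - 0| (max |(1+s) - (1+t)| |(1-s) - (1-t)|) := by
        exact max_le_max le_rfl (abs_min_sub_min_le_max _ _ _ _)
    _ ≤ |s - t| := by
        apply max_le
        · simp [abs_nonneg]
        · apply max_le
          · rw [show (1:ℝ)+s - (1+t) = s - t by ring]
          · rw [show (1:ℝ)-s - (1-t) = -(s-t) by ring, abs_neg]

/-- Decomposition of the tent as a difference of two monotone functions. -/
lemma tent_eq_sub (s : ℝ) :
    tent s = max 0 (min 1 (1 + s)) - max 0 (min 1 s) := by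
  unfold tent
  rcases le_total s (-1) with h1 | h1
  · rw [max_eq_left (le_trans (min_le_left _ _) (by linarith)),
      min_eq_right (by linarith : (1:ℝ) + s ≤ 1),
      max_eq_left (by linarith : 1 + s ≤ 0),
      min_eq_right (by linarith : s ≤ 1),
      max_eq_left (by linarith : s ≤ 0)]
    ring
  · rcases le_total s 0 with h2 | h2
    · rw [min_eq_left (by linarith : (1:ℝ) + s ≤ 1 - s),
        max_eq_right (by linarith : (0:ℝ) ≤ 1 + s),
        min_eq_right (by linarith : (1:ℝ) + s ≤ 1),
        max_eq_right (by linarith : (0:ℝ) ≤ 1 + s),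
        min_eq_right (by linarith : s ≤ 1),
        max_eq_left (by linarith : s ≤ 0)]
      ring
    · rcases le_total s 1 with h3 | h3
      · rw [min_eq_right (by linarith : (1:ℝ) - s ≤ 1 + s),
          max_eq_right (by linarith : (0:ℝ) ≤ 1 - s),
          min_eq_left (by linarith : (1:ℝ) ≤ 1 + s),
          max_eq_right zero_le_one,
          min_eq_right (by linarith : s ≤ 1),
          max_eq_right (by linarith : (0:ℝ) ≤ s)]
      · rw [max_eq_left (le_trans (min_le_right _ _) (by linarith)),
          min_eq_left (by linarith : (1:ℝ) ≤ 1 + s),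
          max_eq_right zero_le_one,
          min_eq_left (by linarith : (1:ℝ) ≤ s),
          max_eq_right zero_le_one]
        ring

/-- Sum of increments of a monotone function over ordered disjoint intervals. -/
lemma mono_sum_le (g : ℝ → ℝ) (hg : Monotone g) :
    ∀ (k : ℕ) (x y : Fin k → ℝ), (∀ i j : Fin k, i < j → y i ≤ x j) →
    ∀ A B : ℝ, A ≤ B → (∀ i, A ≤ x i) → (∀ i, y i ≤ B) → (∀ i, x i ≤ y i) →
    ∑ i, (g (y i) - g (x i)) ≤ g B - g A := by
  intro k
  induction k with
  | zero =>
    intro x y _ A B hAB _ _ _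
    simpa using sub_nonneg.2 (hg hAB)
  | succ k ih =>
    intro x y hord A B hAB hA hB hxy
    rw [Fin.sum_univ_castSucc]
    have h1 : ∑ i : Fin k, (g (y i.castSucc) - g (x i.castSucc)) ≤ g (x (Fin.last k)) - g A := by
      apply ih (fun i => x i.castSucc) (fun i => y i.castSucc)
        (fun i j hij => hord _ _ (Fin.castSucc_lt_castSucc_iff.mpr hij))
        A (x (Fin.last k)) (hA _) (fun i => hA _)
        (fun i => hord i.castSucc (Fin.last k) (Fin.castSucc_lt_last i))
        (fun i => hxy _)
    have h2 : g (y (Fin.last k)) ≤ g B := hg (hB _)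
    linarith

/-- Total variation bound for a scaled tent over ordered disjoint intervals in `[0,1]`. -/
lemma tent_tv_le (qn c : ℝ) (hc : 0 < c) (k : ℕ) (x y : Fin k → ℝ)
    (hx : ∀ i, x i ∈ Set.Icc (0:ℝ) 1) (hy : ∀ i, y i ∈ Set.Icc (0:ℝ) 1)
    (hxy : ∀ i, x i < y i) (hord : ∀ i j : Fin k, i < j → y i ≤ x j) :
    ∑ i, |tent ((y i - qn) / c) - tent ((x i - qn) / c)| ≤ 2 := by
  set P : ℝ → ℝ := fun t => max 0 (min 1 (1 + (t - qn) / c)) with hP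
  set M : ℝ → ℝ := fun t => max 0 (min 1 ((t - qn) / c)) with hM
  have hmono : Monotone fun t : ℝ => (t - qn) / c := fun s t hst =>
    (div_le_div_iff_of_pos_right hc).2 (by linarith)
  have hPm : Monotone P := fun s t hst =>
    max_le_max le_rfl (min_le_min le_rfl (by have := hmono hst; dsimp at this ⊢; linarith))
  have hMm : Monotone M := fun s t hst =>
    max_le_max le_rfl (min_le_min le_rfl (hmono hst))
  have hdecomp : ∀ t : ℝ, tent ((t - qn) / c) = P t - M t := fun t => tent_eq_sub _
  have hbdP : P 1 - P 0 ≤ 1 := by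
    simp only [hP]
    have h0 : (0:ℝ) ≤ max 0 (min 1 (1 + ((0:ℝ) - qn) / c)) := le_max_left _ _
    have h1 : max 0 (min 1 (1 + ((1:ℝ) - qn) / c)) ≤ 1 := max_le zero_le_one (min_le_left _ _)
    linarith
  have hbdM : M 1 - M 0 ≤ 1 := by
    simp only [hM]
    have h0 : (0:ℝ) ≤ max 0 (min 1 (((0:ℝ) - qn) / c)) := le_max_left _ _
    have h1 : max 0 (min 1 (((1:ℝ) - qn) / c)) ≤ 1 := max_le zero_le_one (min_le_left _ _)
    linarith
  calc ∑ i, |tent ((y i - qn) / c) - tent ((x i - qn) / c)|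
      ≤ ∑ i, ((P (y i) - P (x i)) + (M (y i) - M (x i))) := by
        apply Finset.sum_le_sum
        intro i _
        have hP1 : 0 ≤ P (y i) - P (x i) := sub_nonneg.2 (hPm (hxy i).le)
        have hM1 : 0 ≤ M (y i) - M (x i) := sub_nonneg.2 (hMm (hxy i).le)
        rw [hdecomp, hdecomp]
        rw [abs_le]
        constructor <;> [linarith; linarith]
    _ = (∑ i, (P (y i) - P (x i))) + (∑ i, (M (y i) - M (x i))) := Finset.sum_add_distrib
    _ ≤ (P 1 - P 0) + (M 1 - M 0) := by
        gcongr <;>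
          [exact mono_sum_le P hPm k x y hord 0 1 zero_le_one (fun i => (hx i).1)
            (fun i => (hy i).2) (fun i => (hxy i).le);
           exact mono_sum_le M hMm k x y hord 0 1 zero_le_one (fun i => (hx i).1)
            (fun i => (hy i).2) (fun i => (hxy i).le)]
    _ ≤ 2 := by linarith

/-- Let `(a n)`, `(b n)` be positive reals with `Σ a n < ∞`, let `(q n)` enumerate the
rationals of `[0,1]`, and set `f x = Σ_n a n · ‖(x − q n)/b n‖`.  Then `f` is absolutely
continuous on `[0,1]`: for every `ε > 0` there is `δ > 0` such that for every finite
collection of pairwise disjoint subintervals `(x i, y i)` of `[0,1]` of total length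
`< δ` one has `Σ |f (y i) − f (x i)| < ε`. -/
theorem stmt_17 (a b : ℕ → ℝ) (ha : ∀ n, 0 < a n) (hb : ∀ n, 0 < b n)
    (hsum : Summable a) (q : ℕ → ℝ) (hq : Function.Injective q)
    (hq1 : ∀ n, q n ∈ Set.Icc (0:ℝ) 1 ∧ ∃ r : ℚ, (r : ℝ) = q n)
    (hq2 : ∀ r : ℚ, (r : ℝ) ∈ Set.Icc (0:ℝ) 1 → ∃ n, q n = (r : ℝ))
    (f : ℝ → ℝ) (hf : ∀ x, f x = ∑' n : ℕ, a n * tent ((x - q n) / b n)) :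
    ∀ ε > 0, ∃ δ > 0, ∀ (k : ℕ) (x y : Fin k → ℝ),
      (∀ i, x i ∈ Set.Icc (0:ℝ) 1) → (∀ i, y i ∈ Set.Icc (0:ℝ) 1) →
      (∀ i, x i < y i) → (∀ i j : Fin k, i < j → y i ≤ x j) →
      (∑ i, (y i - x i)) < δ →
      (∑ i, |f (y i) - f (x i)|) < ε := by
  intro ε hε
  -- summability of the basic series at a point
  have hsummand : ∀ x : ℝ, Summable fun n => a n * tent ((x - q n) / b n) := by
    intro x
    apply Summable.of_nonneg_of_le
      (fun n => mul_nonneg (ha n).le (tent_nonneg _))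
      (fun n => ?_) hsum
    calc a n * tent ((x - q n) / b n) ≤ a n * 1 :=
          mul_le_mul_of_nonneg_left (tent_le_one _) (ha n).le
      _ = a n := mul_one _
  -- the increment function
  set v : ℕ → ℝ → ℝ → ℝ :=
    fun n x y => a n * |tent ((y - q n) / b n) - tent ((x - q n) / b n)| with hv
  have hv_nonneg : ∀ n x y, 0 ≤ v n x y :=
    fun n x y => mul_nonneg (ha n).le (abs_nonneg _)
  have hv_le : ∀ n x y, v n x y ≤ 2 * a n := by
    intro n x y
    have h1 : |tent ((y - q n) / b n) - tent ((x - q n) / b n)| ≤ 2 := by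
      have := tent_nonneg ((y - q n) / b n)
      have := tent_le_one ((y - q n) / b n)
      have := tent_nonneg ((x - q n) / b n)
      have := tent_le_one ((x - q n) / b n)
      rw [abs_le]; constructor <;> linarith
    calc v n x y ≤ a n * 2 := mul_le_mul_of_nonneg_left h1 (ha n).le
      _ = 2 * a n := by ring
  have hv_summable : ∀ x y : ℝ, Summable fun n => v n x y := by
    intro x y
    exact Summable.of_nonneg_of_le (fun n => hv_nonneg n x y) (fun n => hv_le n x y)
      (hsum.mul_left 2)
  -- key pointwise bound
  have hf_diff : ∀ x y : ℝ, |f y - f x| ≤ ∑' n, v n x y := by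
    intro x y
    have heq : f y - f x = ∑' n, (a n * tent ((y - q n) / b n) - a n * tent ((x - q n) / b n)) := by
      rw [hf, hf, ← Summable.tsum_sub (hsummand y) (hsummand x)]
    rw [heq]
    calc |∑' n, (a n * tent ((y - q n) / b n) - a n * tent ((x - q n) / b n))|
        ≤ ∑' n, |a n * tent ((y - q n) / b n) - a n * tent ((x - q n) / b n)| := by
          have hs : Summable fun n =>
              |a n * tent ((y - q n) / b n) - a n * tent ((x - q n) / b n)| := by
            have : (fun n => |a n * tent ((y - q n) / b n) - a n * tent ((x - q n) / b n)|)
                = fun n => v n x y := by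
              funext n; rw [hv]; rw [← mul_sub, abs_mul, abs_of_nonneg (ha n).le]
            rw [this]; exact hv_summable x y
          have h3 := norm_tsum_le_tsum_norm
            (f := fun n => a n * tent ((y - q n) / b n) - a n * tent ((x - q n) / b n))
            (by simpa [Real.norm_eq_abs] using hs)
          simpa [Real.norm_eq_abs] using h3
      _ = ∑' n, v n x y := by
          congr 1; funext n; rw [hv, ← mul_sub, abs_mul, abs_of_nonneg (ha n).le]
  -- choose the cutoff N
  have htail : Filter.Tendsto (fun N => ∑' n, a (n + N)) Filter.atTop (nhds 0) :=
    tendsto_sum_nat_add a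
  obtain ⟨N, hN⟩ := (htail.eventually (eventually_lt_nhds (show (0:ℝ) < ε/4 by linarith))).exists
  -- Lipschitz constant for the head
  set L : ℝ := ∑ n ∈ Finset.range N, a n / b n with hL
  have hL0 : 0 ≤ L :=
    Finset.sum_nonneg fun n _ => div_nonneg (ha n).le (hb n).le
  refine ⟨ε / (2 * (L + 1)), by positivity, ?_⟩
  intro k x y hx hy hxy hord hS
  have hS0 : 0 ≤ ∑ i, (y i - x i) :=
    Finset.sum_nonneg fun i _ => by linarith [hxy i]
  -- split each increment into head and tail
  have hsplit : ∀ i : Fin k,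
      ∑' n, v n (x i) (y i)
        = (∑ n ∈ Finset.range N, v n (x i) (y i)) + ∑' m, v (m + N) (x i) (y i) :=
    fun i => (Summable.sum_add_tsum_nat_add N (hv_summable (x i) (y i))).symm
  -- head estimate: Lipschitz
  have hhead : ∀ i : Fin k, ∑ n ∈ Finset.range N, v n (x i) (y i) ≤ L * (y i - x i) := by
    intro i
    rw [hL, Finset.sum_mul]
    apply Finset.sum_le_sum
    intro n _
    have hlip : |tent ((y i - q n) / b n) - tent ((x i - q n) / b n)|
        ≤ (y i - x i) / b n := by
      calc |tent ((y i - q n) / b n) - tent ((x i - q n) / b n)|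
          ≤ |(y i - q n) / b n - (x i - q n) / b n| := tent_lip _ _
        _ = (y i - x i) / b n := by
            rw [div_sub_div_same, show y i - q n - (x i - q n) = y i - x i by ring,
              abs_of_nonneg (div_nonneg (by linarith [hxy i]) (hb n).le)]
    calc v n (x i) (y i) ≤ a n * ((y i - x i) / b n) :=
          mul_le_mul_of_nonneg_left hlip (ha n).le
      _ = a n / b n * (y i - x i) := by ring
  -- tail estimate: total variation
  have hvsum_shift : ∀ i : Fin k, Summable fun m => v (m + N) (x i) (y i) :=
    fun i => (summable_nat_add_iff N).2 (hv_summable (x i) (y i))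
  have hashift : Summable fun m => a (m + N) := (summable_nat_add_iff N).2 hsum
  have htv : ∀ m : ℕ, ∑ i, v (m + N) (x i) (y i) ≤ 2 * a (m + N) := by
    intro m
    have : ∑ i, v (m + N) (x i) (y i)
        = a (m + N) * ∑ i, |tent ((y i - q (m + N)) / b (m + N))
            - tent ((x i - q (m + N)) / b (m + N))| := by
      rw [Finset.mul_sum]
    rw [this]
    have h2 := tent_tv_le (q (m + N)) (b (m + N)) (hb (m + N)) k x y hx hy hxy hord
    calc a (m + N) * ∑ i, |tent ((y i - q (m + N)) / b (m + N))
            - tent ((x i - q (m + N)) / b (m + N))|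
        ≤ a (m + N) * 2 := mul_le_mul_of_nonneg_left h2 (ha _).le
      _ = 2 * a (m + N) := by ring
  have htailsum : ∑ i, ∑' m, v (m + N) (x i) (y i) ≤ 2 * ∑' m, a (m + N) := by
    have hswap : ∑ i, ∑' m, v (m + N) (x i) (y i)
        = ∑' m, ∑ i, v (m + N) (x i) (y i) :=
      (Summable.tsum_finsetSum fun i _ => hvsum_shift i).symm
    rw [hswap, ← tsum_mul_left]
    apply Summable.tsum_le_tsum htv
    · apply Summable.of_nonneg_of_le
        (fun m => Finset.sum_nonneg fun i _ => hv_nonneg _ _ _) htv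
        (hashift.mul_left 2)
    · exact hashift.mul_left 2
  -- combine
  have hmain : ∑ i, |f (y i) - f (x i)|
      ≤ L * (∑ i, (y i - x i)) + 2 * ∑' m, a (m + N) := by
    calc ∑ i, |f (y i) - f (x i)|
        ≤ ∑ i, ∑' n, v n (x i) (y i) :=
          Finset.sum_le_sum fun i _ => hf_diff (x i) (y i)
      _ = ∑ i, ((∑ n ∈ Finset.range N, v n (x i) (y i)) + ∑' m, v (m + N) (x i) (y i)) :=
          Finset.sum_congr rfl fun i _ => hsplit i
      _ = (∑ i, ∑ n ∈ Finset.range N, v n (x i) (y i))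
            + ∑ i, ∑' m, v (m + N) (x i) (y i) := Finset.sum_add_distrib
      _ ≤ (∑ i, L * (y i - x i)) + 2 * ∑' m, a (m + N) :=
          add_le_add (Finset.sum_le_sum fun i _ => hhead i) htailsum
      _ = L * (∑ i, (y i - x i)) + 2 * ∑' m, a (m + N) := by
          rw [← Finset.mul_sum]
  have hδ2 : L * (ε / (2 * (L + 1))) ≤ ε / 2 := by
    have h2 : (0:ℝ) < 2 * (L + 1) := by linarith
    rw [mul_div_assoc', div_le_div_iff₀ h2 two_pos]
    nlinarith [hε.le]
  have hLS : L * (∑ i, (y i - x i)) ≤ L * (ε / (2 * (L + 1))) :=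
    mul_le_mul_of_nonneg_left hS.le hL0
  linarith [hmain, hN]
end
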